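/- Let W be a standard one-dimensional Brownian motion and L^W its local time at 0. Suppose A_t = Φ(L_t^W) where Φ is a continuously differentiable function on [0,∞), and define X_t = √(2 A_t) W_t with A_t > 0. Then the local time at 0 of the continuous semimartingale X satisfies dL_t^X = √(2 A_t) dL_t^W; that is, L_t^X = ∫_0^t √(2 A_s) dL_s^W. -/

import Mathlib

/-!
On an interval where `f = √(2A)` varies by at most a factor `ρ`, say `m ≤ f ≤ ρ m`, the set
`{f |W| ≤ ε}` lies between `{|W| ≤ ε / (ρ m)}` and `{|W| ≤ ε / m}`, and the density `f² = 2A`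
between `m²` and `ρ² m²`. The occupation-time limits of `W` therefore squeeze the normalized
occupation integral of `X = f W` over that interval, as `ε → 0`, between `ρ⁻² ∫ f dμW` and
`ρ² ∫ f dμW`. Summing over a partition of `[0, t]` that is fine enough for the uniformly continuous
`log f` and letting `ρ → 1` identifies the limit `L^X_t` with `∫_(0,t] f dμW`.
-/

open MeasureTheory Filter Set Topology

def RatioSqueeze {α : Type*} (l : Filter α) (F : α → ℝ) (x r : ℝ) : Prop :=
  ∃ lo hi : α → ℝ, ∃ a b : ℝ, Tendsto lo l (𝓝 a) ∧ Tendsto hi l (𝓝 b) ∧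
    x / r ≤ a ∧ b ≤ r * x ∧ ∀ᶠ e in l, lo e ≤ F e ∧ F e ≤ hi e

lemma tendsto_of_forall_ratioSqueeze {α : Type*} {l : Filter α} {F : α → ℝ} {x : ℝ}
    (h : ∀ r > 1, RatioSqueeze l F x r) : Tendsto F l (𝓝 x) := by
  have hdiv : Tendsto (fun r : ℝ => x / r) (𝓝[>] 1) (𝓝 x) := by
    have : ContinuousAt (fun r : ℝ => x / r) 1 := continuousAt_const.div continuousAt_id one_ne_zero
    simpa using this.tendsto.mono_left nhdsWithin_le_nhds
  have hmul : Tendsto (fun r : ℝ => r * x) (𝓝[>] 1) (𝓝 x) := by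
    have : ContinuousAt (fun r : ℝ => r * x) 1 := continuousAt_id.mul continuousAt_const
    simpa using this.tendsto.mono_left nhdsWithin_le_nhds
  refine tendsto_order.2 ⟨fun a' ha' => ?_, fun b' hb' => ?_⟩
  · obtain ⟨r, hra, hr⟩ := ((hdiv.eventually (lt_mem_nhds ha')).and self_mem_nhdsWithin).exists
    obtain ⟨lo, _, a, _, hlo, _, ha, _, hF⟩ := h r hr
    filter_upwards [hlo.eventually (lt_mem_nhds (hra.trans_le ha)), hF] with e he hFe
    exact he.trans_le hFe.1
  · obtain ⟨r, hrb, hr⟩ := ((hmul.eventually (gt_mem_nhds hb')).and self_mem_nhdsWithin).exists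
    obtain ⟨_, hi, _, b, _, hhi, _, hb, hF⟩ := h r hr
    filter_upwards [hhi.eventually (gt_mem_nhds (hb.trans_lt hrb)), hF] with e he hFe
    exact hFe.2.trans_lt he

lemma RatioSqueeze.sum {α ι : Type*} {l : Filter α} {s : Finset ι} {F : ι → α → ℝ}
    {x : ι → ℝ} {r : ℝ} (h : ∀ j ∈ s, RatioSqueeze l (F j) (x j) r) :
    RatioSqueeze l (fun e => ∑ j ∈ s, F j e) (∑ j ∈ s, x j) r := by
  choose! lo hi a b hlo hhi ha hb hF using h
  refine ⟨fun e => ∑ j ∈ s, lo j e, fun e => ∑ j ∈ s, hi j e, ∑ j ∈ s, a j, ∑ j ∈ s, b j,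
    tendsto_finsetSum _ hlo, tendsto_finsetSum _ hhi, ?_, ?_, ?_⟩
  · rw [Finset.sum_div]
    exact Finset.sum_le_sum ha
  · rw [Finset.mul_sum]
    exact Finset.sum_le_sum hb
  · filter_upwards [(Filter.eventually_all_finset s).2 hF] with e he
    exact ⟨Finset.sum_le_sum fun j hj => (he j hj).1, Finset.sum_le_sum fun j hj => (he j hj).2⟩

lemma exists_partition_sub_lt {a b δ : ℝ} (hab : a ≤ b) (hδ : 0 < δ) :
    ∃ n : ℕ, ∃ p : ℕ → ℝ, Monotone p ∧ p 0 = a ∧ p n = b ∧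
      ∀ j < n, Icc (p j) (p (j + 1)) ⊆ Icc a b ∧ p (j + 1) - p j < δ := by
  obtain ⟨n, hn⟩ := exists_nat_gt ((b - a) / δ)
  have hn0 : (0 : ℝ) < n := lt_of_le_of_lt (div_nonneg (sub_nonneg.2 hab) hδ.le) hn
  have hp : Monotone fun j : ℕ => a + j * ((b - a) / n) := fun i j hij => by
    have : (i : ℝ) ≤ j := Nat.cast_le.2 hij
    dsimp only
    gcongr
  refine ⟨n, fun j => a + j * ((b - a) / n), hp, by simp, by field_simp; ring, fun j hj => ⟨?_, ?_⟩⟩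
  · refine Icc_subset_Icc (by simpa using hp (Nat.zero_le j)) ((hp hj).trans_eq ?_)
    field_simp
    ring
  · rw [div_lt_comm₀ hδ hn0] at hn
    push_cast
    linarith

lemma exists_partition_ratio_le {f : ℝ → ℝ} {a b ρ : ℝ} (hab : a ≤ b)
    (hf : ContinuousOn f (Icc a b)) (hfpos : ∀ s ∈ Icc a b, 0 < f s) (hρ : 1 < ρ) :
    ∃ n : ℕ, ∃ p : ℕ → ℝ, Monotone p ∧ p 0 = a ∧ p n = b ∧
      ∀ j < n, ∃ m > 0, ∀ s ∈ Ioc (p j) (p (j + 1)), m ≤ f s ∧ f s ≤ ρ * m := by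
  have hlogρ : 0 < Real.log ρ := Real.log_pos hρ
  obtain ⟨δ, hδ, hUC⟩ := Metric.uniformContinuousOn_iff.1
    (isCompact_Icc.uniformContinuousOn_of_continuous
      (hf.log fun s hs => (hfpos s hs).ne')) (Real.log ρ / 2) (by positivity)
  obtain ⟨n, p, hp, hp0, hpn, hpiece⟩ := exists_partition_sub_lt hab hδ
  refine ⟨n, p, hp, hp0, hpn, fun j hj => ⟨Real.exp (Real.log (f (p j)) - Real.log ρ / 2),
    Real.exp_pos _, fun s hs => ?_⟩⟩
  obtain ⟨hsub, hmesh⟩ := hpiece j hj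
  have hs' : s ∈ Icc a b := hsub (Ioc_subset_Icc_self hs)
  have hpj : p j ∈ Icc a b := hsub (left_mem_Icc.2 (hp j.le_succ))
  have hdist : dist s (p j) < δ := by
    rw [Real.dist_eq, abs_of_pos (sub_pos.2 hs.1)]
    linarith [hs.2]
  have hclose := abs_lt.1 (Real.dist_eq _ _ ▸ hUC s hs' (p j) hpj hdist)
  rw [← Real.exp_log (hfpos s hs')]
  refine ⟨Real.exp_le_exp.2 (by linarith), ?_⟩
  rw [← Real.exp_log (zero_lt_one.trans hρ), ← Real.exp_add, Real.log_exp]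
  exact Real.exp_le_exp.2 (by linarith)

lemma integrableOn_of_forall_mem_Icc {α : Type*} [MeasurableSpace α] {ν : Measure α}
    {g : α → ℝ} {J : Set α} {m M : ℝ} (hg : Measurable g) (hJ : MeasurableSet J)
    (hνJ : ν J ≠ ⊤) (hm : 0 ≤ m) (hgJ : ∀ s ∈ J, g s ∈ Icc m M) : IntegrableOn g J ν :=
  Measure.integrableOn_of_bounded hνJ hg.aestronglyMeasurable <|
    (ae_restrict_iff' hJ).2 <| ae_of_all _ fun s hs => by
      rw [Real.norm_eq_abs, abs_of_nonneg (hm.trans (hgJ s hs).1)]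
      exact (hgJ s hs).2

lemma setIntegral_Ioc_eq_sum {ν : Measure ℝ} {g : ℝ → ℝ} {p : ℕ → ℝ} (hp : Monotone p) (n : ℕ)
    (hg : ∀ j < n, IntegrableOn g (Ioc (p j) (p (j + 1))) ν) :
    ∫ s in Ioc (p 0) (p n), g s ∂ν =
      ∑ j ∈ Finset.range n, ∫ s in Ioc (p j) (p (j + 1)), g s ∂ν := by
  rw [← intervalIntegral.integral_of_le (hp (Nat.zero_le n)),
    ← intervalIntegral.sum_integral_adjacent_intervals fun j hj =>
      (intervalIntegrable_iff_integrableOn_Ioc_of_le (hp j.le_succ)).2 (hg j hj)]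
  exact Finset.sum_congr rfl fun j _ => intervalIntegral.integral_of_le (hp j.le_succ)

lemma measureReal_sep_Ioc_eq_sub {ν : Measure ℝ} [IsLocallyFiniteMeasure ν] {P : ℝ → Prop}
    (hP : MeasurableSet {s | P s}) {a c d : ℝ} (hac : a ≤ c) (hcd : c ≤ d) :
    ν.real {s ∈ Ioc c d | P s} = ν.real {s ∈ Ioc a d | P s} - ν.real {s ∈ Ioc a c | P s} := by
  have hunion : {s ∈ Ioc a d | P s} = {s ∈ Ioc a c | P s} ∪ {s ∈ Ioc c d | P s} := by
    rw [← Ioc_union_Ioc_eq_Ioc hac hcd]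
    exact sep_union
  have hdisj : Disjoint {s ∈ Ioc a c | P s} {s ∈ Ioc c d | P s} :=
    (Ioc_disjoint_Ioc_of_le le_rfl).mono (sep_subset _ _) (sep_subset _ _)
  rw [hunion, measureReal_union hdisj (measurableSet_Ioc.inter hP)
    ((measure_mono (sep_subset _ _)).trans_lt measure_Ioc_lt_top).ne
    ((measure_mono (sep_subset _ _)).trans_lt measure_Ioc_lt_top).ne]
  ring

lemma tendsto_inv_two_mul_comp_div {g : ℝ → ℝ} {ℓ M : ℝ} (hM : 0 < M)
    (h : Tendsto (fun ε => (2 * ε)⁻¹ * g ε) (𝓝[>] 0) (𝓝 ℓ)) :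
    Tendsto (fun ε => (2 * ε)⁻¹ * g (ε / M)) (𝓝[>] 0) (𝓝 (ℓ / M)) := by
  have hdiv : Tendsto (fun ε : ℝ => ε / M) (𝓝[>] 0) (𝓝[>] 0) := by
    refine tendsto_nhdsWithin_of_tendsto_nhds_of_eventually_within _ ?_ ?_
    · have : ContinuousAt (fun ε : ℝ => ε / M) 0 := continuousAt_id.div_const M
      simpa using this.tendsto.mono_left nhdsWithin_le_nhds
    · filter_upwards [self_mem_nhdsWithin] with ε hε using div_pos hε hM
  refine ((h.comp hdiv).div_const M).congr fun ε => ?_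
  simp only [Function.comp_apply]
  field_simp

lemma setIntegral_indicator_mul_abs_le_bounds {α : Type*} [MeasurableSpace α] {ν : Measure α}
    {W f : α → ℝ} {J : Set α} {m M : ℝ} (hW : Measurable W) (hf : Measurable f)
    (hJ : MeasurableSet J) (hνJ : ν J ≠ ⊤) (hm : 0 < m) (hmM : m ≤ M)
    (hfJ : ∀ s ∈ J, m ≤ f s ∧ f s ≤ M) (ε : ℝ) :
    m ^ 2 * ν.real {s ∈ J | |W s| ≤ ε / M}
        ≤ ∫ s in J, {s | f s * |W s| ≤ ε}.indicator (fun s => f s ^ 2) s ∂ν ∧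
      ∫ s in J, {s | f s * |W s| ≤ ε}.indicator (fun s => f s ^ 2) s ∂ν
        ≤ M ^ 2 * ν.real {s ∈ J | |W s| ≤ ε / m} := by
  have hM : 0 < M := hm.trans_le hmM
  have hS : MeasurableSet {s | f s * |W s| ≤ ε} :=
    measurableSet_le (hf.mul hW.abs) measurable_const
  have hT : ∀ c, MeasurableSet {s | |W s| ≤ c} := fun c => measurableSet_le hW.abs measurable_const
  have hint : IntegrableOn ({s | f s * |W s| ≤ ε}.indicator fun s => f s ^ 2) J ν :=
    (integrableOn_of_forall_mem_Icc (hf.pow_const 2) hJ hνJ (sq_nonneg m) fun s hs =>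
      ⟨pow_le_pow_left₀ hm.le (hfJ s hs).1 2,
        pow_le_pow_left₀ (hm.le.trans (hfJ s hs).1) (hfJ s hs).2 2⟩).indicator hS
  have hconst : ∀ c C : ℝ, IntegrableOn ({s | |W s| ≤ c}.indicator fun _ => C) J ν :=
    fun c C => (integrableOn_const hνJ).indicator (hT c)
  have hmeas : ∀ c C : ℝ, ∫ s in J, {s | |W s| ≤ c}.indicator (fun _ => C) s ∂ν
      = C * ν.real {s ∈ J | |W s| ≤ c} := fun c C => by
    rw [setIntegral_indicator (hT c), setIntegral_const, smul_eq_mul, mul_comm]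
    rfl
  constructor
  · rw [← hmeas]
    refine setIntegral_mono_on (hconst _ _) hint hJ fun s hs => ?_
    by_cases hsT : s ∈ {s | |W s| ≤ ε / M}
    · have hsS : s ∈ {s | f s * |W s| ≤ ε} := by
        calc f s * |W s| ≤ M * |W s| := by gcongr; exact (hfJ s hs).2
          _ ≤ ε := (le_div_iff₀' hM).1 hsT
      rw [indicator_of_mem hsT, indicator_of_mem hsS]
      exact pow_le_pow_left₀ hm.le (hfJ s hs).1 2
    · rw [indicator_of_notMem hsT]
      exact indicator_nonneg (fun _ _ => sq_nonneg _) s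
  · rw [← hmeas]
    refine setIntegral_mono_on hint (hconst _ _) hJ fun s hs => ?_
    by_cases hsS : s ∈ {s | f s * |W s| ≤ ε}
    · have hsT : s ∈ {s | |W s| ≤ ε / m} := by
        refine (le_div_iff₀' hm).2 ?_
        calc m * |W s| ≤ f s * |W s| := by gcongr; exact (hfJ s hs).1
          _ ≤ ε := hsS
      rw [indicator_of_mem hsT, indicator_of_mem hsS]
      exact pow_le_pow_left₀ (hm.le.trans (hfJ s hs).1) (hfJ s hs).2 2
    · rw [indicator_of_notMem hsS]
      exact indicator_nonneg (fun _ _ => sq_nonneg _) s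

lemma setIntegral_mem_Icc_of_forall_mem_Icc {α : Type*} [MeasurableSpace α] {ν : Measure α}
    {f : α → ℝ} {J : Set α} {m M : ℝ} (hf : Measurable f) (hJ : MeasurableSet J)
    (hνJ : ν J ≠ ⊤) (hm : 0 ≤ m) (hfJ : ∀ s ∈ J, f s ∈ Icc m M) :
    ∫ s in J, f s ∂ν ∈ Icc (m * ν.real J) (M * ν.real J) := by
  have hint : IntegrableOn f J ν := integrableOn_of_forall_mem_Icc hf hJ hνJ hm hfJ
  refine ⟨setIntegral_ge_of_const_le_real hJ hνJ (fun s hs => (hfJ s hs).1) hint, ?_⟩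
  rw [mul_comm, ← smul_eq_mul, ← setIntegral_const]
  exact setIntegral_mono_on hint (integrableOn_const hνJ) hJ fun s hs => (hfJ s hs).2

lemma ratioSqueeze_occupation {α : Type*} [MeasurableSpace α] {ν μ : Measure α}
    {W f : α → ℝ} {J : Set α} {m ρ : ℝ} (hW : Measurable W) (hf : Measurable f)
    (hJ : MeasurableSet J) (hνJ : ν J ≠ ⊤) (hμJ : μ J ≠ ⊤) (hm : 0 < m) (hρ : 1 ≤ ρ)
    (hfJ : ∀ s ∈ J, m ≤ f s ∧ f s ≤ ρ * m)
    (hL : Tendsto (fun ε => (2 * ε)⁻¹ * ν.real {s ∈ J | |W s| ≤ ε}) (𝓝[>] 0) (𝓝 (μ.real J))) :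
    RatioSqueeze (𝓝[>] 0)
      (fun ε => (2 * ε)⁻¹ * ∫ s in J, {s | f s * |W s| ≤ ε}.indicator (fun s => f s ^ 2) s ∂ν)
      (∫ s in J, f s ∂μ) (ρ ^ 2) := by
  have hρm : 0 < ρ * m := by positivity
  obtain ⟨hIlo, hIhi⟩ := setIntegral_mem_Icc_of_forall_mem_Icc hf hJ hμJ hm.le hfJ
  refine ⟨fun ε => m ^ 2 * ((2 * ε)⁻¹ * ν.real {s ∈ J | |W s| ≤ ε / (ρ * m)}),
    fun ε => (ρ * m) ^ 2 * ((2 * ε)⁻¹ * ν.real {s ∈ J | |W s| ≤ ε / m}),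
    m ^ 2 * (μ.real J / (ρ * m)), (ρ * m) ^ 2 * (μ.real J / m),
    (tendsto_inv_two_mul_comp_div hρm hL).const_mul _,
    (tendsto_inv_two_mul_comp_div hm hL).const_mul _, ?_, ?_, ?_⟩
  · calc (∫ s in J, f s ∂μ) / ρ ^ 2 ≤ ρ * m * μ.real J / ρ ^ 2 := by gcongr
      _ = m ^ 2 * (μ.real J / (ρ * m)) := by field_simp
  · calc (ρ * m) ^ 2 * (μ.real J / m) = ρ ^ 2 * (m * μ.real J) := by field_simp
      _ ≤ ρ ^ 2 * ∫ s in J, f s ∂μ := by gcongr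
  · filter_upwards [self_mem_nhdsWithin] with ε (hε : 0 < ε)
    obtain ⟨hlo, hhi⟩ := setIntegral_indicator_mul_abs_le_bounds (ε := ε) hW hf hJ hνJ hm
      (le_mul_of_one_le_left hm.le hρ) hfJ
    rw [mul_left_comm, mul_left_comm ((ρ * m) ^ 2)]
    exact ⟨by gcongr, by gcongr⟩

theorem tendsto_integral_indicator_mul_abs_le {W f : ℝ → ℝ} {μ : Measure ℝ} {a b : ℝ}
    (hab : a ≤ b) (hW : Measurable W) (hf : Continuous f) (hfpos : ∀ s ∈ Icc a b, 0 < f s)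
    (hμ : μ (Ioc a b) ≠ ⊤)
    (hL : ∀ c d, a ≤ c → c ≤ d → d ≤ b →
      Tendsto (fun ε => (2 * ε)⁻¹ * volume.real {s ∈ Ioc c d | |W s| ≤ ε}) (𝓝[>] 0)
        (𝓝 (μ.real (Ioc c d)))) :
    Tendsto (fun ε => (2 * ε)⁻¹ *
        ∫ s in Ioc a b, {s | f s * |W s| ≤ ε}.indicator (fun s => f s ^ 2) s)
      (𝓝[>] 0) (𝓝 (∫ s in Ioc a b, f s ∂μ)) := by
  refine tendsto_of_forall_ratioSqueeze fun r hr => ?_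
  obtain ⟨ρ, hρ, rfl⟩ : ∃ ρ, 1 < ρ ∧ ρ ^ 2 = r :=
    ⟨√r, (Real.lt_sqrt zero_le_one).2 (by simpa using hr), Real.sq_sqrt (by linarith)⟩
  obtain ⟨n, p, hp, rfl, rfl, hpiece⟩ := exists_partition_ratio_le hab hf.continuousOn hfpos hρ
  choose! m hm hmf using hpiece
  have hμJ : ∀ j < n, μ (Ioc (p j) (p (j + 1))) ≠ ⊤ := fun j hj =>
    ne_top_of_le_ne_top hμ (measure_mono (Ioc_subset_Ioc (hp (Nat.zero_le j)) (hp hj)))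
  have hS : ∀ ε, MeasurableSet {s | f s * |W s| ≤ ε} := fun ε =>
    measurableSet_le (hf.measurable.mul hW.abs) measurable_const
  have hF : ∀ ε, ∫ s in Ioc (p 0) (p n), {s | f s * |W s| ≤ ε}.indicator (fun s => f s ^ 2) s
      = ∑ j ∈ Finset.range n, ∫ s in Ioc (p j) (p (j + 1)),
          {s | f s * |W s| ≤ ε}.indicator (fun s => f s ^ 2) s := fun ε =>
    setIntegral_Ioc_eq_sum hp n fun j _ => (hf.pow 2).integrableOn_Ioc.indicator (hS ε)
  simp_rw [hF, Finset.mul_sum]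
  have hfJ : ∀ j < n, IntegrableOn f (Ioc (p j) (p (j + 1))) μ := fun j hj =>
    integrableOn_of_forall_mem_Icc hf.measurable measurableSet_Ioc (hμJ j hj) (hm j hj).le
      (hmf j hj)
  rw [setIntegral_Ioc_eq_sum hp n hfJ]
  refine RatioSqueeze.sum fun j hj => ?_
  rw [Finset.mem_range] at hj
  exact ratioSqueeze_occupation hW hf.measurable measurableSet_Ioc measure_Ioc_lt_top.ne
    (hμJ j hj) (hm j hj) hρ.le (hmf j hj) (hL _ _ (hp (Nat.zero_le j)) (hp j.le_succ) (hp hj))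

lemma tendsto_occupation_Ioc {W L : ℝ → ℝ} (hW : Measurable W)
    (hL : ∀ t, 0 ≤ t → Tendsto (fun ε : ℝ =>
      (2 * ε)⁻¹ * (volume {s ∈ Ioc (0:ℝ) t | |W s| ≤ ε}).toReal) (𝓝[>] 0) (𝓝 (L t)))
    {c d : ℝ} (hc : 0 ≤ c) (hcd : c ≤ d) :
    Tendsto (fun ε => (2 * ε)⁻¹ * volume.real {s ∈ Ioc c d | |W s| ≤ ε}) (𝓝[>] 0)
      (𝓝 (L d - L c)) := by
  refine ((hL d (hc.trans hcd)).sub (hL c hc)).congr fun ε => ?_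
  rw [measureReal_sep_Ioc_eq_sub (measurableSet_le hW.abs measurable_const) hc hcd, mul_sub]
  rfl

theorem stmt5_general (W A X LW LX : ℝ → ℝ) (Φ : ℝ → ℝ)
    (hW : Continuous W) (hΦ : ContDiff ℝ 1 Φ)
    (hA : ∀ t, A t = Φ (LW t)) (hApos : ∀ t, 0 < A t)
    (hX : ∀ t, X t = Real.sqrt (2 * A t) * W t)
    (hLWmono : Monotone LW) (hLWcont : Continuous LW)
    (μW : Measure ℝ)
    (hμW : ∀ a b, a ≤ b → μW (Set.Ioc a b) = ENNReal.ofReal (LW b - LW a))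
    (hLW : ∀ t, 0 ≤ t →
      Tendsto (fun ε : ℝ =>
          (2 * ε)⁻¹ * (volume {s ∈ Set.Ioc (0:ℝ) t | |W s| ≤ ε}).toReal)
        (nhdsWithin 0 (Set.Ioi 0)) (nhds (LW t)))
    (hLX : ∀ t, 0 ≤ t →
      Tendsto (fun ε : ℝ =>
          (2 * ε)⁻¹ * ∫ s in Set.Ioc (0:ℝ) t,
            Set.indicator {s | |X s| ≤ ε} (fun s => 2 * A s) s)
        (nhdsWithin 0 (Set.Ioi 0)) (nhds (LX t))) :
    ∀ t, 0 ≤ t → LX t = ∫ s in Set.Ioc (0:ℝ) t, Real.sqrt (2 * A s) ∂μW := by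
  intro t ht
  have hAcont : Continuous A := (continuous_congr hA).2 (hΦ.continuous.comp hLWcont)
  have hμWreal : ∀ c d, c ≤ d → μW.real (Ioc c d) = LW d - LW c := fun c d hcd => by
    rw [measureReal_def, hμW c d hcd, ENNReal.toReal_ofReal (sub_nonneg.2 (hLWmono hcd))]
  have hocc := tendsto_integral_indicator_mul_abs_le (f := fun s => √(2 * A s)) ht hW.measurable
    (continuous_const.mul hAcont).sqrt (fun s _ => Real.sqrt_pos.2 (by linarith [hApos s]))
    (by rw [hμW 0 t ht]; exact ENNReal.ofReal_ne_top)
    fun c d hc hcd _ => hμWreal c d hcd ▸ tendsto_occupation_Ioc hW.measurable hLW hc hcd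
  refine tendsto_nhds_unique (hLX t ht) (hocc.congr fun ε => ?_)
  have hXabs : ∀ s, |X s| = √(2 * A s) * |W s| := fun s => by
    rw [hX, abs_mul, abs_of_nonneg (Real.sqrt_nonneg _)]
  have hsq : ∀ s, √(2 * A s) ^ 2 = 2 * A s := fun s => Real.sq_sqrt (by linarith [hApos s])
  simp_rw [hXabs, hsq]

/-- Pathwise formulation of `dL^X_t = √(2 A_t) dL^W_t` for `X_t = √(2 A_t) W_t`,
`A_t = Φ(L^W_t)`.  The local times at `0` of `W` and of `X` are characterized by
the occupation-time limits `L^M_t = lim_{ε→0} (2ε)⁻¹ ∫_0^t 1_{|M_s|≤ε} d⟨M⟩_s`,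
with `d⟨W⟩_s = ds` and `d⟨X⟩_s = 2 A_s ds`, and `μW` denotes the
Lebesgue–Stieltjes measure of the continuous nondecreasing function `L^W`,
which is carried by the zero set of `W`. -/
theorem stmt5 (W A X LW LX : ℝ → ℝ) (Φ : ℝ → ℝ)
    (hW : Continuous W) (hΦ : ContDiff ℝ 1 Φ)
    (hA : ∀ t, A t = Φ (LW t)) (hApos : ∀ t, 0 < A t)
    (hX : ∀ t, X t = Real.sqrt (2 * A t) * W t)
    (hLWmono : Monotone LW) (hLWcont : Continuous LW) (hLW0 : LW 0 = 0)
    (μW : Measure ℝ)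
    (hμW : ∀ a b, a ≤ b → μW (Set.Ioc a b) = ENNReal.ofReal (LW b - LW a))
    (hμWsupp : μW {s | W s ≠ 0} = 0)
    (hLW : ∀ t, 0 ≤ t →
      Tendsto (fun ε : ℝ =>
          (2 * ε)⁻¹ * (volume {s ∈ Set.Ioc (0:ℝ) t | |W s| ≤ ε}).toReal)
        (nhdsWithin 0 (Set.Ioi 0)) (nhds (LW t)))
    (hLX : ∀ t, 0 ≤ t →
      Tendsto (fun ε : ℝ =>
          (2 * ε)⁻¹ * ∫ s in Set.Ioc (0:ℝ) t,
            Set.indicator {s | |X s| ≤ ε} (fun s => 2 * A s) s)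
        (nhdsWithin 0 (Set.Ioi 0)) (nhds (LX t)))
    (hLX0 : LX 0 = 0) :
    ∀ t, 0 ≤ t → LX t = ∫ s in Set.Ioc (0:ℝ) t, Real.sqrt (2 * A s) ∂μW :=
  stmt5_general W A X LW LX Φ hW hΦ hA hApos hX hLWmono hLWcont μW hμW hLW hLX
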